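/- arXiv:2605.15859 — 3 statements merged into one kernel-verified Lean document; each statement's English description precedes it below -/
import Mathlib

section
/- Let ν ≪ π be probability measures, set ℓ := log(dν/dπ) and R := R₂(ν‖π). Then the positive part satisfies E_ν[(max{ℓ,0})²] ≤ R² + 2R + 2. -/
/-!
For `R ≥ 0` the pointwise bound `(max t 0)² ≤ R² + 2(R+1)e^{t-R}` (for `t ≥ R` this is
`e^u ≥ 1 + u + u²/2` at `u = t - R`) at `t = ℓ`, integrated against `ν`, gives
`R² + 2(R+1)e^{-R} E_ν[dν/dπ] = R² + 2R + 2`. That `R ≥ 0`, i.e.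
`E_ν[dν/dπ] = ∫ (dν/dπ)² dπ ≥ 1`, follows from `2g ≤ g² + 1` for `g = dν/dπ`.
-/

open MeasureTheory
open scoped ENNReal

section

open Real

theorem sq_max_zero_le_sq_add_mul_exp_sub {t R : ℝ} (hR : 0 ≤ R) :
    max t 0 ^ 2 ≤ R ^ 2 + 2 * (R + 1) * exp (t - R) := by
  have hexp := exp_pos (t - R)
  rcases le_total t 0 with ht | ht
  · rw [max_eq_right ht]
    nlinarith
  rw [max_eq_left ht]
  rcases le_total t R with htR | htR
  · nlinarith
  · nlinarith [quadratic_le_exp_of_nonneg (sub_nonneg.2 htR)]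

theorem integral_sq_max_log_zero_le {α : Type*} [MeasurableSpace α] {μ : Measure α}
    [IsProbabilityMeasure μ] {f : α → ℝ} (hf_nonneg : 0 ≤ᵐ[μ] f) (hf : Integrable f μ)
    (h_one_le : 1 ≤ ∫ x, f x ∂μ) :
    ∫ x, max (log (f x)) 0 ^ 2 ∂μ ≤
      log (∫ x, f x ∂μ) ^ 2 + 2 * log (∫ x, f x ∂μ) + 2 := by
  set R := log (∫ x, f x ∂μ)
  have hR : 0 ≤ R := log_nonneg h_one_le
  have hexpR : exp R = ∫ x, f x ∂μ := exp_log (by linarith)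
  set c := 2 * (R + 1) * exp (-R)
  have h_pointwise : ∀ s : ℝ, 0 ≤ s → max (log s) 0 ^ 2 ≤ R ^ 2 + c * s := by
    intro s hs
    rcases hs.eq_or_lt with rfl | hs
    · simp only [log_zero, max_self, mul_zero, add_zero]
      nlinarith
    calc max (log s) 0 ^ 2 ≤ R ^ 2 + 2 * (R + 1) * exp (log s - R) :=
          sq_max_zero_le_sq_add_mul_exp_sub hR
      _ = R ^ 2 + c * s := by rw [exp_sub, exp_log hs, div_eq_mul_inv, ← exp_neg]; ring
  calc ∫ x, max (log (f x)) 0 ^ 2 ∂μ ≤ ∫ x, (R ^ 2 + c * f x) ∂μ :=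
        integral_mono_of_nonneg (ae_of_all _ fun _ => sq_nonneg _)
          ((integrable_const _).add (hf.const_mul c))
          (hf_nonneg.mono fun x hx => h_pointwise (f x) hx)
    _ = R ^ 2 + c * exp R := by
        rw [integral_add (integrable_const _) (hf.const_mul c), integral_const,
          integral_const_mul, probReal_univ, one_smul, hexpR]
    _ = R ^ 2 + 2 * R + 2 := by
        rw [mul_assoc, ← exp_add, neg_add_cancel, exp_zero]; ring

end

theorem ENNReal.two_mul_le_mul_self_add_one (a : ℝ≥0∞) : 2 * a ≤ a * a + 1 := by
  rcases eq_or_ne a ⊤ with rfl | ha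
  · simp
  lift a to NNReal using ha
  norm_cast
  rw [← NNReal.coe_le_coe]
  push_cast
  nlinarith [sq_nonneg ((a : ℝ) - 1)]

namespace MeasureTheory.Measure

variable {α : Type*} [MeasurableSpace α] {ν π : Measure α}
  [IsProbabilityMeasure ν] [IsProbabilityMeasure π]

theorem one_le_lintegral_rnDeriv_self (hac : ν ≪ π) : 1 ≤ ∫⁻ x, ν.rnDeriv π x ∂ν := by
  have h_two : 1 + 1 ≤ ∫⁻ x, ν.rnDeriv π x ∂ν + 1 :=
    calc (1 : ℝ≥0∞) + 1 = ∫⁻ x, 2 * ν.rnDeriv π x ∂π := by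
          rw [lintegral_const_mul' _ _ ENNReal.ofNat_ne_top, lintegral_rnDeriv hac, measure_univ,
            one_add_one_eq_two, mul_one]
      _ ≤ ∫⁻ x, (ν.rnDeriv π x * ν.rnDeriv π x + 1) ∂π :=
          lintegral_mono fun x => ENNReal.two_mul_le_mul_self_add_one _
      _ = ∫⁻ x, ν.rnDeriv π x ∂ν + 1 := by
          rw [lintegral_add_right _ measurable_const,
            lintegral_rnDeriv_mul hac (measurable_rnDeriv ν π).aemeasurable, lintegral_const,
            measure_univ, mul_one]
  exact (ENNReal.add_le_add_iff_right ENNReal.one_ne_top).1 h_two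

theorem one_le_integral_toReal_rnDeriv_self (hac : ν ≪ π)
    (hint : Integrable (fun x => (ν.rnDeriv π x).toReal) ν) :
    1 ≤ ∫ x, (ν.rnDeriv π x).toReal ∂ν := by
  have hg : AEMeasurable (ν.rnDeriv π) ν := (measurable_rnDeriv ν π).aemeasurable
  rw [integral_toReal hg (hac.ae_le (rnDeriv_lt_top ν π))]
  exact ENNReal.toReal_mono ((integrable_toReal_iff hg (hac.ae_le (rnDeriv_ne_top ν π))).1 hint)
    (one_le_lintegral_rnDeriv_self hac)

end MeasureTheory.Measure

/-- For probability measures ν ≪ π with ℓ = log(dν/dπ) and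
R = R₂(ν‖π) = log E_ν[dν/dπ] (assumed finite, i.e. dν/dπ is ν-integrable),
the positive part satisfies E_ν[(max{ℓ,0})²] ≤ R² + 2R + 2. -/
theorem pos_part_log_density_sq_bound {α : Type*} [MeasurableSpace α]
    (ν π : Measure α) [IsProbabilityMeasure ν] [IsProbabilityMeasure π]
    (hac : ν ≪ π)
    (hint : Integrable (fun x => (ν.rnDeriv π x).toReal) ν)
    (R : ℝ) (hR : R = Real.log (∫ x, (ν.rnDeriv π x).toReal ∂ν)) :
    ∫ x, (max (Real.log ((ν.rnDeriv π x).toReal)) 0)^2 ∂ν ≤ R^2 + 2*R + 2 := by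
  subst hR
  exact integral_sq_max_log_zero_le (ae_of_all _ fun _ => ENNReal.toReal_nonneg) hint
    (Measure.one_le_integral_toReal_rnDeriv_self hac hint)
end

section
/- Let ν ≪ π be probability measures with π ≪ ν, and set ℓ := log(dν/dπ). Then E_ν[(max{−ℓ,0})²] ≤ 2. -/
open MeasureTheory

noncomputable section

/-- For mutually absolutely continuous probability measures ν, π
with ℓ = log(dν/dπ), the negative part satisfies E_ν[(max{−ℓ,0})²] ≤ 2. -/
theorem neg_part_log_density_sq_bound {α : Type*} [MeasurableSpace α]
    (ν π : Measure α) [IsProbabilityMeasure ν] [IsProbabilityMeasure π]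
    (hνπ : ν ≪ π) (hπν : π ≪ ν) :
    ∫ x, (max (-(Real.log ((ν.rnDeriv π x).toReal))) 0)^2 ∂ν ≤ 2 := by
  -- the dominating function: 2 * (π.rnDeriv ν x).toReal
  set g : α → ℝ := fun x => 2 * (π.rnDeriv ν x).toReal with hg
  have hInt : Integrable g ν := (Measure.integrable_toReal_rnDeriv).const_mul 2
  have hIntg : ∫ x, g x ∂ν = 2 := by
    rw [hg, integral_const_mul, Measure.integral_toReal_rnDeriv hπν]
    simp
  have hbound : ∀ᵐ x ∂ν,
      (max (-(Real.log ((ν.rnDeriv π x).toReal))) 0)^2 ≤ g x := by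
    filter_upwards [Measure.rnDeriv_pos hνπ, hνπ.ae_le (Measure.rnDeriv_lt_top ν π),
      Measure.inv_rnDeriv hνπ] with x hpos hlt hinv
    have hf : (0:ℝ) < (ν.rnDeriv π x).toReal :=
      ENNReal.toReal_pos hpos.ne' hlt.ne
    set f : ℝ := (ν.rnDeriv π x).toReal with hfdef
    have hginv : g x = 2 * f⁻¹ := by
      simp only [hg, ← hinv, Pi.inv_apply, ENNReal.toReal_inv, hfdef]
    rw [hginv]
    set t : ℝ := max (-(Real.log f)) 0 with ht
    have ht0 : 0 ≤ t := le_max_right _ _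
    have hquad : t^2 ≤ 2 * Real.exp t := by
      have := Real.quadratic_le_exp_of_nonneg ht0
      nlinarith
    rcases le_or_gt (Real.log f) 0 with hl | hl
    · have htt : t = -(Real.log f) := max_eq_left (by linarith)
      have : Real.exp t = f⁻¹ := by
        rw [htt, Real.exp_neg, Real.exp_log hf]
      rw [this] at hquad
      exact hquad
    · have htt : t = 0 := max_eq_right (by linarith)
      rw [htt]
      have : 0 ≤ 2 * f⁻¹ := by positivity
      simpa using this
  have hnn : ∀ᵐ x ∂ν, 0 ≤ (max (-(Real.log ((ν.rnDeriv π x).toReal))) 0)^2 :=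
    Filter.Eventually.of_forall fun x => sq_nonneg _
  calc ∫ x, (max (-(Real.log ((ν.rnDeriv π x).toReal))) 0)^2 ∂ν
      ≤ ∫ x, g x ∂ν := integral_mono_of_nonneg hnn hInt hbound
    _ = 2 := hIntg
end
end

section
/- Suppose a π-stationary two-step scheme satisfies: (forward) KL(ρ^X‖π^X) − KL(ρ^Y‖π^Y) ≥ (h(1−hL)/2)·FI(ρ^Y‖π^Y); (backward, exact) FI(ρ̃₊^X‖π^X) ≤ min{FI(ρ^Y‖π^Y), (2/h)(KL(ρ^Y‖π^Y) − KL(ρ̃₊^X‖π^X))}; and the approximate backward step satisfies KL(ρ₊^X‖π^X) ≤ KL(ρ̃₊^X‖π^X) + ε_KL² and FI(ρ₊^X‖π^X) ≤ 2·FI(ρ̃₊^X‖π^X) + ε_FI². Then (h/2)(1 − Lh/2)·FI(ρ₊^X‖π^X) ≤ KL(ρ^X‖π^X) − KL(ρ₊^X‖π^X) + ε_KL² + (h/2)(1 − Lh/2)·ε_FI². -/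
/-- Per-step descent bound for the proximal sampler with
approximate RGO. Given the forward KL decay, the exact backward step bounds
(both forms of the min), and the approximate backward-step error guarantees,
one concludes (h/2)(1 − Lh/2)·FI(ρ₊‖π) ≤ KL(ρ^X‖π) − KL(ρ₊‖π) + ε_KL²
+ (h/2)(1 − Lh/2)·ε_FI². -/
theorem approx_rgo_one_step (h L : ℝ) (hh : 0 < h) (hL : 0 < L) (hhL : h < 1/L)
    (KLX KLY KLtilde KLplus FIY FItilde FIplus εKL εFI : ℝ)
    (hKLX : 0 ≤ KLX) (hKLY : 0 ≤ KLY) (hKLt : 0 ≤ KLtilde) (hKLp : 0 ≤ KLplus)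
    (hFIY : 0 ≤ FIY) (hFIt : 0 ≤ FItilde) (hFIp : 0 ≤ FIplus)
    (hfwd : KLX - KLY ≥ h * (1 - h*L) / 2 * FIY)
    (hbwd1 : FItilde ≤ FIY)
    (hbwd2 : FItilde ≤ 2/h * (KLY - KLtilde))
    (happroxKL : KLplus ≤ KLtilde + εKL^2)
    (happroxFI : FIplus ≤ 2 * FItilde + εFI^2) :
    h/2 * (1 - L*h/2) * FIplus
      ≤ KLX - KLplus + εKL^2 + h/2 * (1 - L*h/2) * εFI^2 := by
  have h1 : 1 - h*L > 0 := by
    have := (lt_div_iff₀ hL).mp hhL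
    nlinarith
  have hb2 : h * FItilde ≤ 2 * (KLY - KLtilde) := by
    have := mul_le_mul_of_nonneg_left hbwd2 hh.le
    have e : h * (2 / h * (KLY - KLtilde)) = 2 * (KLY - KLtilde) := by
      field_simp
    linarith [e ▸ this]
  nlinarith [mul_le_mul_of_nonneg_left happroxFI (le_of_lt (by nlinarith : (0:ℝ) < h/2 * (1 - L*h/2))),
    mul_le_mul_of_nonneg_left hbwd1 (by nlinarith : (0:ℝ) ≤ h*(1-h*L)/2), hfwd, hb2]
end
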